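/- Boundedness of the UKF measurement-update statistics under bounded measurement function (condition C6, measurement update). Suppose κ > 0 (so all sigma-point weights are positive), h : ℝ^{n_x} → ℝ^{n_y} satisfies ‖h(x)‖₂ ≤ δ_h for all x, and R ⪯ r̄·I is a symmetric positive semidefinite measurement-noise covariance. Let q₀,…,q_{2n_x} with weights ω₀,…,ω_{2n_x} be the sigma points generated from a predicted estimate x̂ and a positive semidefinite predicted covariance Σ with ‖Σ‖ ≤ σ̄. Then the predicted measurement ŷ = Σ_{i=0}^{2n_x} ωᵢ·h(qᵢ) satisfies ‖ŷ‖₂ ≤ δ_h; the innovation covariance estimate Σ^y = Σ_{i=0}^{2n_x} ωᵢ·h(qᵢ)h(qᵢ)ᵀ − ŷŷᵀ + R satisfies 0 ⪯ Σ^y ⪯ (δ_h² + r̄)·I; and the cross-covariance estimate Σ^{xy} = Σ_{i=0}^{2n_x} ωᵢ·qᵢ h(qᵢ)ᵀ − x̂ŷᵀ = Σ_{i=0}^{2n_x} ωᵢ·(qᵢ − x̂)(h(qᵢ) − ŷ)ᵀ satisfies ‖Σ^{xy}‖ ≤ 2·δ_h·√((n_x + κ)·σ̄). -/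

import Mathlib

open Matrix Finset

noncomputable section

/-- Euclidean (`l₂`) norm of a vector in `ℝⁿ`. -/
def norm2 {n : ℕ} (x : Fin n → ℝ) : ℝ := Real.sqrt (∑ j, x j ^ 2)

/-- Spectral norm of a real matrix (operator norm w.r.t. Euclidean norms). -/
def specNorm {m n : ℕ} (A : Matrix (Fin m) (Fin n) ℝ) : ℝ :=
  ‖LinearMap.toContinuousLinearMap (Matrix.toEuclideanLin A)‖

/-- Loewner order `A ⪯ B`: `B - A` is positive semidefinite. -/
def psdLE {n : ℕ} (A B : Matrix (Fin n) (Fin n) ℝ) : Prop := (B - A).PosSemidef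

/-- UKF sigma-point weights: `ω₀ = κ/(n+κ)` and `ωᵢ = 1/(2(n+κ))` for `i = 1, …, 2n`. -/
def ukfWeight (n : ℕ) (κ : ℝ) : ℕ → ℝ :=
  fun i => if i = 0 then κ / ((n : ℝ) + κ) else 1 / (2 * ((n : ℝ) + κ))

/-- UKF sigma points generated from the estimate `xhat`, a square-root factor `S` of the
covariance (so `Σ = S * Sᵀ`), and scaling parameter `κ`: `x̃₀ = x̂`,
`x̃ᵢ = x̂ + [√((n+κ)Σ)]_{(:,i)}` for `i = 1, …, n` and
`x̃_{n+i} = x̂ − [√((n+κ)Σ)]_{(:,i)}` for `i = 1, …, n`, where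
`√((n+κ)Σ) = √(n+κ) • S` is the corresponding factor of `(n+κ)Σ`. -/
def ukfSigma {n : ℕ} (xhat : Fin n → ℝ) (S : Matrix (Fin n) (Fin n) ℝ) (κ : ℝ) :
    ℕ → (Fin n → ℝ) := fun i =>
  if h1 : 1 ≤ i ∧ i ≤ n then
    xhat + Real.sqrt ((n : ℝ) + κ) • (fun j => S j ⟨i - 1, by omega⟩)
  else if h2 : n + 1 ≤ i ∧ i ≤ 2 * n then
    xhat - Real.sqrt ((n : ℝ) + κ) • (fun j => S j ⟨i - n - 1, by omega⟩)
  else xhat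

/-! With `κ > 0` the sigma-point weights are nonnegative and sum to one, and the sigma points are
symmetric about `x̂`, so their weighted mean is `x̂`. Hence `ŷ` is a convex combination of points
of the ball of radius `δ_h`; `Σ^y - R` is the weighted covariance of the `h(qᵢ)`, which is
positive semidefinite and dominated by the second moment `∑ ωᵢ h(qᵢ) h(qᵢ)ᵀ ⪯ δ_h² I`; and
`Σ^{xy}` is a convex combination of rank-one matrices `(qᵢ - x̂)(h(qᵢ) - ŷ)ᵀ` of norm at most
`√((n+κ) σ̄) · 2 δ_h`, because every column of `S` has norm at most `‖S‖ = √‖S Sᵀ‖`. -/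

open scoped Matrix.Norms.L2Operator MatrixOrder

section Norms

variable {m n : ℕ}

lemma norm2_eq_norm (x : Fin n → ℝ) : norm2 x = ‖WithLp.toLp 2 x‖ := by
  simp [norm2, EuclideanSpace.norm_eq]

lemma norm2_nonneg (x : Fin n → ℝ) : 0 ≤ norm2 x := Real.sqrt_nonneg _

lemma sq_norm2 (x : Fin n → ℝ) : norm2 x ^ 2 = x ⬝ᵥ x := by
  rw [norm2, Real.sq_sqrt (by positivity)]
  simp [dotProduct, sq]

lemma norm2_smul (c : ℝ) (x : Fin n → ℝ) : norm2 (c • x) = |c| * norm2 x := by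
  rw [norm2_eq_norm, norm2_eq_norm, WithLp.toLp_smul, norm_smul, Real.norm_eq_abs]

lemma specNorm_eq_norm (A : Matrix (Fin m) (Fin n) ℝ) : specNorm A = ‖A‖ := rfl

lemma psdLE_iff_le (A B : Matrix (Fin n) (Fin n) ℝ) : psdLE A B ↔ A ≤ B := Iff.rfl

lemma norm2_sub_le (a b : Fin n → ℝ) : norm2 (a - b) ≤ norm2 a + norm2 b := by
  simpa only [norm2_eq_norm, WithLp.toLp_sub] using norm_sub_le _ _

lemma abs_dotProduct_le_norm2_mul_norm2 (a b : Fin n → ℝ) : |a ⬝ᵥ b| ≤ norm2 a * norm2 b := by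
  simpa [norm2_eq_norm, EuclideanSpace.inner_toLp_toLp, dotProduct_comm, mul_comm]
    using abs_real_inner_le_norm (WithLp.toLp 2 a) (WithLp.toLp 2 b)

lemma norm2_col_le_sqrt_specNorm_mul_transpose (S : Matrix (Fin m) (Fin n) ℝ) (i : Fin n) :
    norm2 (fun j => S j i) ≤ √(specNorm (S * Sᵀ)) := by
  have hnorm : ‖S‖ = √‖S * Sᵀ‖ := by
    rw [← conjTranspose_eq_transpose_of_trivial,
      ← conjTranspose_conjTranspose S, conjTranspose_conjTranspose Sᴴ,
      l2_opNorm_conjTranspose_mul_self, l2_opNorm_conjTranspose,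
      Real.sqrt_mul_self (norm_nonneg _)]
  have h := l2_opNorm_mulVec S (PiLp.single 2 i 1)
  rw [PiLp.norm_single, norm_one, mul_one, hnorm] at h
  simp only [PiLp.ofLp_single, mulVec_single_one] at h
  rw [norm2_eq_norm]
  exact h

lemma specNorm_le_of_norm2_mulVec_le (A : Matrix (Fin m) (Fin n) ℝ) {c : ℝ} (hc : 0 ≤ c)
    (h : ∀ v, norm2 (A *ᵥ v) ≤ c * norm2 v) : specNorm A ≤ c :=
  ContinuousLinearMap.opNorm_le_bound _ hc fun v => by
    have hv := h (WithLp.ofLp v)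
    rw [norm2_eq_norm, norm2_eq_norm] at hv
    exact hv

lemma specNorm_vecMulVec_le (a : Fin m → ℝ) (b : Fin n → ℝ) :
    specNorm (vecMulVec a b) ≤ norm2 a * norm2 b := by
  refine specNorm_le_of_norm2_mulVec_le _
    (mul_nonneg (norm2_nonneg a) (norm2_nonneg b)) fun v => ?_
  rw [vecMulVec_mulVec, op_smul_eq_smul, norm2_eq_norm, WithLp.toLp_smul, norm_smul,
    Real.norm_eq_abs, ← norm2_eq_norm]
  calc |b ⬝ᵥ v| * norm2 a ≤ norm2 b * norm2 v * norm2 a :=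
        mul_le_mul_of_nonneg_right (abs_dotProduct_le_norm2_mul_norm2 b v) (norm2_nonneg a)
    _ = norm2 a * norm2 b * norm2 v := by ring

end Norms

section WeightedAverage

variable {ι : Type*} (s : Finset ι) {ω : ι → ℝ}

lemma sum_smul_vecMulVec_sub_vecMulVec_sum {R m n : Type*} [CommRing R] (ω : ι → R)
    (a : ι → m → R) (b : ι → n → R) (hω : ∑ i ∈ s, ω i = 1) :
    ∑ i ∈ s, ω i • vecMulVec (a i) (b i)
        - vecMulVec (∑ i ∈ s, ω i • a i) (∑ i ∈ s, ω i • b i)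
      = ∑ i ∈ s, ω i • vecMulVec (a i - ∑ j ∈ s, ω j • a j) (b i - ∑ j ∈ s, ω j • b j) := by
  ext k l
  simp only [Matrix.sub_apply, Matrix.sum_apply, Matrix.smul_apply, vecMulVec_apply,
    Finset.sum_apply, Pi.smul_apply, Pi.sub_apply, smul_eq_mul]
  set A := ∑ j ∈ s, ω j * a j k
  set B := ∑ j ∈ s, ω j * b j l
  have hexpand : ∀ i, ω i * ((a i k - A) * (b i l - B))
      = ω i * (a i k * b i l) - ω i * a i k * B - A * (ω i * b i l) + A * B * ω i :=
    fun i => by ring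
  simp only [hexpand, sum_add_distrib, sum_sub_distrib, ← sum_mul, ← mul_sum, hω]
  ring

variable {n : ℕ}

lemma norm2_sum_smul_le (hω₀ : ∀ i ∈ s, 0 ≤ ω i) (hω : ∑ i ∈ s, ω i = 1)
    {v : ι → Fin n → ℝ} {δ : ℝ} (hv : ∀ i ∈ s, norm2 (v i) ≤ δ) :
    norm2 (∑ i ∈ s, ω i • v i) ≤ δ := by
  simp only [norm2_eq_norm] at hv ⊢
  rw [WithLp.toLp_sum]
  calc ‖∑ i ∈ s, WithLp.toLp 2 (ω i • v i)‖ ≤ ∑ i ∈ s, ω i * δ := by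
        refine (norm_sum_le _ _).trans (sum_le_sum fun i hi => ?_)
        rw [WithLp.toLp_smul, norm_smul, Real.norm_of_nonneg (hω₀ i hi)]
        exact mul_le_mul_of_nonneg_left (hv i hi) (hω₀ i hi)
    _ = δ := by rw [← sum_mul, hω, one_mul]

lemma specNorm_sum_smul_vecMulVec_le {m : ℕ} (hω₀ : ∀ i ∈ s, 0 ≤ ω i) (hω : ∑ i ∈ s, ω i = 1)
    {a : ι → Fin m → ℝ} {b : ι → Fin n → ℝ} {α β : ℝ} (ha : ∀ i ∈ s, norm2 (a i) ≤ α)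
    (hb : ∀ i ∈ s, norm2 (b i) ≤ β) :
    specNorm (∑ i ∈ s, ω i • vecMulVec (a i) (b i)) ≤ α * β := by
  rw [specNorm_eq_norm]
  calc ‖∑ i ∈ s, ω i • vecMulVec (a i) (b i)‖ ≤ ∑ i ∈ s, ω i * (α * β) := by
        refine (norm_sum_le _ _).trans (sum_le_sum fun i hi => ?_)
        rw [norm_smul, Real.norm_of_nonneg (hω₀ i hi), ← specNorm_eq_norm]
        refine mul_le_mul_of_nonneg_left ?_ (hω₀ i hi)
        exact (specNorm_vecMulVec_le _ _).trans
          (mul_le_mul (ha i hi) (hb i hi) (norm2_nonneg _) ((norm2_nonneg _).trans (ha i hi)))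
    _ = α * β := by rw [← sum_mul, hω, one_mul]

lemma posSemidef_vecMulVec_self {m : Type*} [Fintype m] (v : m → ℝ) :
    (vecMulVec v v).PosSemidef := by
  simpa using posSemidef_vecMulVec_self_star v

lemma posSemidef_sum_smul_vecMulVec_self {m : Type*} [Fintype m] (hω₀ : ∀ i ∈ s, 0 ≤ ω i)
    (v : ι → m → ℝ) :
    (∑ i ∈ s, ω i • vecMulVec (v i) (v i)).PosSemidef :=
  posSemidef_sum s fun i hi => (posSemidef_vecMulVec_self (v i)).smul (hω₀ i hi)

lemma vecMulVec_self_le_smul_one {v : Fin n → ℝ} {δ : ℝ} (hv : norm2 v ≤ δ) :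
    vecMulVec v v ≤ δ ^ 2 • 1 := by
  have hδ : 0 ≤ δ ^ 2 := sq_nonneg δ
  refine PosSemidef.of_dotProduct_mulVec_nonneg
    (((PosSemidef.one.smul hδ).isHermitian).sub (posSemidef_vecMulVec_self v).isHermitian)
    fun x => ?_
  have hcs : (v ⬝ᵥ x) ^ 2 ≤ δ ^ 2 * (x ⬝ᵥ x) := by
    calc (v ⬝ᵥ x) ^ 2 = |v ⬝ᵥ x| ^ 2 := (sq_abs _).symm
      _ ≤ (norm2 v * norm2 x) ^ 2 :=
          pow_le_pow_left₀ (abs_nonneg _) (abs_dotProduct_le_norm2_mul_norm2 v x) 2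
      _ ≤ (δ * norm2 x) ^ 2 :=
          pow_le_pow_left₀ (mul_nonneg (norm2_nonneg v) (norm2_nonneg x))
            (mul_le_mul_of_nonneg_right hv (norm2_nonneg x)) 2
      _ = δ ^ 2 * (x ⬝ᵥ x) := by rw [mul_pow, sq_norm2]
  simp only [star_trivial, sub_mulVec, smul_mulVec, one_mulVec, vecMulVec_mulVec,
    op_smul_eq_smul, dotProduct_sub, dotProduct_smul, smul_eq_mul, dotProduct_comm x v]
  nlinarith [hcs]

lemma sum_smul_vecMulVec_le_smul_one (hω₀ : ∀ i ∈ s, 0 ≤ ω i) (hω : ∑ i ∈ s, ω i = 1)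
    {v : ι → Fin n → ℝ} {δ : ℝ} (hv : ∀ i ∈ s, norm2 (v i) ≤ δ) :
    ∑ i ∈ s, ω i • vecMulVec (v i) (v i) ≤ δ ^ 2 • 1 :=
  calc ∑ i ∈ s, ω i • vecMulVec (v i) (v i) ≤ ∑ i ∈ s, ω i • (δ ^ 2 • 1) :=
        sum_le_sum fun i hi => le_iff.mpr <| by
          rw [← smul_sub]; exact (vecMulVec_self_le_smul_one (hv i hi)).smul (hω₀ i hi)
    _ = δ ^ 2 • 1 := by rw [← sum_smul, hω, one_smul]

lemma sum_smul_vecMulVec_sub_sum_le_smul_one (hω₀ : ∀ i ∈ s, 0 ≤ ω i) (hω : ∑ i ∈ s, ω i = 1)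
    {v : ι → Fin n → ℝ} {δ : ℝ} (hv : ∀ i ∈ s, norm2 (v i) ≤ δ) :
    ∑ i ∈ s, ω i • vecMulVec (v i - ∑ j ∈ s, ω j • v j) (v i - ∑ j ∈ s, ω j • v j)
      ≤ δ ^ 2 • 1 := by
  rw [← sum_smul_vecMulVec_sub_vecMulVec_sum s ω v v hω]
  exact (sub_le_self _ (posSemidef_vecMulVec_self _).nonneg).trans
    (sum_smul_vecMulVec_le_smul_one s hω₀ hω hv)

end WeightedAverage

section SigmaPoints

variable {n : ℕ} {κ : ℝ}

lemma ukfWeight_nonneg (hκ : 0 ≤ κ) (i : ℕ) : 0 ≤ ukfWeight n κ i := by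
  unfold ukfWeight
  split_ifs <;> positivity

lemma sum_ukfWeight (hnκ : (n : ℝ) + κ ≠ 0) :
    ∑ i ∈ range (2 * n + 1), ukfWeight n κ i = 1 := by
  rw [sum_range_succ']
  simp only [ukfWeight, Nat.succ_ne_zero, ↓reduceIte, sum_const, card_range, nsmul_eq_mul]
  push_cast
  field_simp

variable (xhat : Fin n → ℝ) (S : Matrix (Fin n) (Fin n) ℝ)

lemma sum_ukfWeight_smul_ukfSigma_sub (κ : ℝ) :
    ∑ i ∈ range (2 * n + 1), ukfWeight n κ i • (ukfSigma xhat S κ i - xhat) = 0 := by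
  rw [sum_range_succ', two_mul, sum_range_add, ← sum_add_distrib]
  have hq0 : ukfSigma xhat S κ 0 = xhat := by simp [ukfSigma]
  rw [hq0, sub_self, smul_zero, add_zero]
  refine sum_eq_zero fun i hi => ?_
  have hi : i < n := mem_range.1 hi
  simp only [ukfSigma, ukfWeight]
  rw [dif_pos (by omega), dif_neg (by omega), dif_pos (by omega)]
  simp [show n + i + 1 - n - 1 = i by omega]

lemma sum_ukfWeight_smul_ukfSigma (hnκ : (n : ℝ) + κ ≠ 0) :
    ∑ i ∈ range (2 * n + 1), ukfWeight n κ i • ukfSigma xhat S κ i = xhat := by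
  have h := sum_ukfWeight_smul_ukfSigma_sub xhat S κ
  simp only [smul_sub, sum_sub_distrib, ← sum_smul, sum_ukfWeight hnκ, one_smul,
    sub_eq_zero] at h
  exact h

lemma norm2_ukfSigma_sub_le (κ : ℝ) (i : ℕ) :
    norm2 (ukfSigma xhat S κ i - xhat) ≤ √((n : ℝ) + κ) * √(specNorm (S * Sᵀ)) := by
  have hcol := norm2_col_le_sqrt_specNorm_mul_transpose S
  unfold ukfSigma
  split_ifs
  · rw [add_sub_cancel_left, norm2_smul, abs_of_nonneg (Real.sqrt_nonneg _)]
    exact mul_le_mul_of_nonneg_left (hcol _) (Real.sqrt_nonneg _)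
  · rw [sub_sub_cancel_left, ← neg_smul, norm2_smul, abs_neg, abs_of_nonneg (Real.sqrt_nonneg _)]
    exact mul_le_mul_of_nonneg_left (hcol _) (Real.sqrt_nonneg _)
  · rw [sub_self, ← zero_smul ℝ 0, norm2_smul, abs_zero, zero_mul]
    positivity

end SigmaPoints

theorem UKF_measurement_update_bounded_general
    {nx ny : ℕ} (h : (Fin nx → ℝ) → (Fin ny → ℝ)) (δh rbar sbar κ : ℝ)
    (xhat : Fin nx → ℝ) (yhat : Fin ny → ℝ)
    (Cov S : Matrix (Fin nx) (Fin nx) ℝ) (R Sy : Matrix (Fin ny) (Fin ny) ℝ)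
    (Sxy : Matrix (Fin nx) (Fin ny) ℝ)
    (hκ : 0 < κ)
    (hh : ∀ x, norm2 (h x) ≤ δh)
    (hR : R.PosSemidef) (hRbar : psdLE R (rbar • 1))
    (hfac : Cov = S * Sᵀ) (hCovbound : specNorm Cov ≤ sbar)
    (hyhat : yhat = ∑ i ∈ Finset.range (2 * nx + 1),
        ukfWeight nx κ i • h (ukfSigma xhat S κ i))
    (hSy : Sy = (∑ i ∈ Finset.range (2 * nx + 1),
        ukfWeight nx κ i • vecMulVec (h (ukfSigma xhat S κ i)) (h (ukfSigma xhat S κ i)))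
      - vecMulVec yhat yhat + R)
    (hSxy : Sxy = (∑ i ∈ Finset.range (2 * nx + 1),
        ukfWeight nx κ i • vecMulVec (ukfSigma xhat S κ i) (h (ukfSigma xhat S κ i)))
      - vecMulVec xhat yhat) :
    norm2 yhat ≤ δh ∧
    Sy.PosSemidef ∧ psdLE Sy ((δh ^ 2 + rbar) • 1) ∧
    Sxy = ∑ i ∈ Finset.range (2 * nx + 1),
        ukfWeight nx κ i • vecMulVec (ukfSigma xhat S κ i - xhat)
          (h (ukfSigma xhat S κ i) - yhat) ∧
    specNorm Sxy ≤ 2 * δh * Real.sqrt (((nx : ℝ) + κ) * sbar) := by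
  set q := ukfSigma xhat S κ
  have hnκ : 0 < (nx : ℝ) + κ := by positivity
  have hω₀ : ∀ i ∈ range (2 * nx + 1), 0 ≤ ukfWeight nx κ i :=
    fun i _ => ukfWeight_nonneg hκ.le i
  have hω := sum_ukfWeight hnκ.ne'
  have hSy' : Sy = ∑ i ∈ range (2 * nx + 1),
      ukfWeight nx κ i • vecMulVec (h (q i) - yhat) (h (q i) - yhat) + R := by
    rw [hSy, hyhat, sum_smul_vecMulVec_sub_vecMulVec_sum _ _ _ _ hω]
  have hSxy' := sum_smul_vecMulVec_sub_vecMulVec_sum _ _ q (fun i => h (q i)) hω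
  rw [sum_ukfWeight_smul_ukfSigma xhat S hnκ.ne', ← hyhat, ← hSxy] at hSxy'
  have hdev : ∀ i ∈ range (2 * nx + 1), norm2 (q i - xhat) ≤ √(((nx : ℝ) + κ) * sbar) :=
    fun i _ => (norm2_ukfSigma_sub_le xhat S κ i).trans <| by
      rw [Real.sqrt_mul hnκ.le, ← hfac]
      gcongr
  have hyhat_le : norm2 yhat ≤ δh := hyhat ▸ norm2_sum_smul_le _ hω₀ hω fun i _ => hh _
  refine ⟨hyhat_le, ?_, ?_, hSxy', ?_⟩
  · rw [hSy']
    exact (posSemidef_sum_smul_vecMulVec_self _ hω₀ _).add hR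
  · rw [psdLE_iff_le, hSy', add_smul, hyhat]
    exact add_le_add (sum_smul_vecMulVec_sub_sum_le_smul_one _ hω₀ hω fun i _ => hh _) hRbar
  · rw [hSxy']
    refine (specNorm_sum_smul_vecMulVec_le (β := 2 * δh) _ hω₀ hω hdev fun i _ => ?_).trans_eq
      (mul_comm _ _)
    linarith [norm2_sub_le (h (q i)) yhat, hh (q i)]

/-- **Boundedness of the UKF measurement-update statistics under a bounded measurement
function (condition C6, measurement update).**  If `κ > 0`, `‖h(x)‖₂ ≤ δ_h` for all `x`,
`R ⪯ r̄ I` is positive semidefinite, and `q₀, …, q_{2n_x}` are the sigma points generated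
from a predicted estimate `x̂` and positive semidefinite predicted covariance `Σ = S Sᵀ`
with `‖Σ‖ ≤ σ̄`, then the predicted measurement `ŷ = ∑ᵢ ωᵢ h(qᵢ)` satisfies `‖ŷ‖₂ ≤ δ_h`;
the innovation covariance estimate `Σ^y = ∑ᵢ ωᵢ h(qᵢ) h(qᵢ)ᵀ − ŷ ŷᵀ + R` satisfies
`0 ⪯ Σ^y ⪯ (δ_h² + r̄) I`; and the cross-covariance estimate
`Σ^{xy} = ∑ᵢ ωᵢ qᵢ h(qᵢ)ᵀ − x̂ ŷᵀ = ∑ᵢ ωᵢ (qᵢ − x̂)(h(qᵢ) − ŷ)ᵀ` satisfies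
`‖Σ^{xy}‖ ≤ 2 δ_h √((n_x + κ) σ̄)`. -/
theorem UKF_measurement_update_bounded
    {nx ny : ℕ} (h : (Fin nx → ℝ) → (Fin ny → ℝ)) (δh rbar sbar κ : ℝ)
    (xhat : Fin nx → ℝ) (yhat : Fin ny → ℝ)
    (Cov S : Matrix (Fin nx) (Fin nx) ℝ) (R Sy : Matrix (Fin ny) (Fin ny) ℝ)
    (Sxy : Matrix (Fin nx) (Fin ny) ℝ)
    (hκ : 0 < κ)
    (hh : ∀ x, norm2 (h x) ≤ δh)
    (hR : R.PosSemidef) (hRbar : psdLE R (rbar • 1))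
    (hCov : Cov.PosSemidef) (hfac : Cov = S * Sᵀ) (hCovbound : specNorm Cov ≤ sbar)
    (hyhat : yhat = ∑ i ∈ Finset.range (2 * nx + 1),
        ukfWeight nx κ i • h (ukfSigma xhat S κ i))
    (hSy : Sy = (∑ i ∈ Finset.range (2 * nx + 1),
        ukfWeight nx κ i • vecMulVec (h (ukfSigma xhat S κ i)) (h (ukfSigma xhat S κ i)))
      - vecMulVec yhat yhat + R)
    (hSxy : Sxy = (∑ i ∈ Finset.range (2 * nx + 1),
        ukfWeight nx κ i • vecMulVec (ukfSigma xhat S κ i) (h (ukfSigma xhat S κ i)))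
      - vecMulVec xhat yhat) :
    norm2 yhat ≤ δh ∧
    Sy.PosSemidef ∧ psdLE Sy ((δh ^ 2 + rbar) • 1) ∧
    Sxy = ∑ i ∈ Finset.range (2 * nx + 1),
        ukfWeight nx κ i • vecMulVec (ukfSigma xhat S κ i - xhat)
          (h (ukfSigma xhat S κ i) - yhat) ∧
    specNorm Sxy ≤ 2 * δh * Real.sqrt (((nx : ℝ) + κ) * sbar) :=
  UKF_measurement_update_bounded_general h δh rbar sbar κ xhat yhat Cov S R Sy Sxy hκ hh hR hRbar
    hfac hCovbound hyhat hSy hSxy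

end
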